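/- Let F be a finite field with |F| ≥ 5. Then Sp₄(F) is a perfect group, i.e., equal to its own commutator subgroup. -/

import Mathlib

/-!
Conjugation by `levi (t • 1)` multiplies the symmetric block of `upperUnipotent S` by `t²`, so
`upperUnipotent ((t² - 1) • S)` is a commutator; over a field with at least four elements some
`t ≠ 0` has `t² ≠ 1`, so all upper unipotents, and their `J`-conjugates the lower unipotents, lie in
the commutator subgroup. For symmetric invertible `X`, `levi X` is a product of unipotents and `J`;
since `GLₙ` is generated by symmetric matrices (diagonal ones, and `W`, `W * T` for a transvection
`T` and the matching transposition matrix `W`), every `levi P` follows. A symplectic matrix whose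
upper-left block `A` is invertible factors as
`lowerUnipotent (C * A⁻¹) * upperUnipotent (B * Aᵀ) * levi A`, and for `n = 2` every symplectic
matrix is moved into this cell by `upperUnipotent P * lowerUnipotent (-P) * upperUnipotent P` for a
suitable diagonal idempotent `P`.
-/

open Matrix

namespace SymplecticGroup

variable {l F : Type*} [Fintype l] [DecidableEq l] [Field F]

local notation "Sp" => symplecticGroup l F

def upperUnipotent (S : Matrix l l F) : Matrix (l ⊕ l) (l ⊕ l) F := fromBlocks 1 S 0 1

def lowerUnipotent (S : Matrix l l F) : Matrix (l ⊕ l) (l ⊕ l) F := fromBlocks 1 0 S 1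

noncomputable def levi (P : Matrix l l F) : Matrix (l ⊕ l) (l ⊕ l) F := fromBlocks P 0 0 P⁻¹ᵀ

lemma upperUnipotent_mul_upperUnipotent (S T : Matrix l l F) :
    upperUnipotent S * upperUnipotent T = upperUnipotent (S + T) := by
  simp [upperUnipotent, fromBlocks_multiply, add_comm]

lemma upperUnipotent_inv (S : Matrix l l F) : (upperUnipotent S)⁻¹ = upperUnipotent (-S) :=
  inv_eq_right_inv (by
    rw [upperUnipotent_mul_upperUnipotent, add_neg_cancel]; simp [upperUnipotent])

lemma levi_mul (P Q : Matrix l l F) : levi (P * Q) = levi P * levi Q := by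
  simp [levi, fromBlocks_multiply, Matrix.mul_inv_rev]

lemma levi_inv {P : Matrix l l F} (hP : IsUnit P.det) : (levi P)⁻¹ = levi P⁻¹ :=
  inv_eq_right_inv (by rw [← levi_mul, mul_nonsing_inv P hP]; simp [levi])

lemma upperUnipotent_mem {S : Matrix l l F} (hS : S.IsSymm) : upperUnipotent S ∈ Sp := by
  simp [upperUnipotent, fromBlocks_mem_iff, hS.eq]

lemma levi_mem {P : Matrix l l F} (hP : IsUnit P.det) : levi P ∈ Sp := by
  simp [levi, fromBlocks_mem_iff, ← transpose_mul, nonsing_inv_mul P hP]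

lemma levi_mul_upperUnipotent_mul_inv {P : Matrix l l F} (hP : IsUnit P.det)
    (S : Matrix l l F) :
    levi P * upperUnipotent S * (levi P)⁻¹ = upperUnipotent (P * S * Pᵀ) := by
  rw [levi_inv hP]
  simp [levi, upperUnipotent, fromBlocks_multiply, Matrix.mul_assoc, mul_nonsing_inv P hP,
    nonsing_inv_nonsing_inv P hP, ← transpose_mul]

lemma J_mul_upperUnipotent_mul_inv (S : Matrix l l F) :
    J l F * upperUnipotent (-S) * (J l F)⁻¹ = lowerUnipotent S := by
  rw [J_inv]
  simp [J, upperUnipotent, lowerUnipotent, fromBlocks_multiply, fromBlocks_neg]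

lemma J_eq_upperUnipotent_mul_lowerUnipotent_mul_upperUnipotent :
    J l F = upperUnipotent (-1) * lowerUnipotent 1 * upperUnipotent (-1) := by
  simp [J, upperUnipotent, lowerUnipotent, fromBlocks_multiply]

lemma levi_eq_of_isSymm {X : Matrix l l F} (hX : X.IsSymm) (hdet : IsUnit X.det) :
    levi X = upperUnipotent X * lowerUnipotent (-X⁻¹) * upperUnipotent X * J l F := by
  simp [J, upperUnipotent, lowerUnipotent, levi, fromBlocks_multiply, transpose_nonsing_inv,
    hX.eq, mul_nonsing_inv X hdet, nonsing_inv_mul X hdet]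

lemma upperUnipotent_mul_lowerUnipotent_mul_upperUnipotent {P : Matrix l l F}
    (hP : IsIdempotentElem P) :
    upperUnipotent P * lowerUnipotent (-P) * upperUnipotent P =
      fromBlocks (1 - P) P (-P) (1 - P) := by
  simp [upperUnipotent, lowerUnipotent, fromBlocks_multiply, hP.eq, sub_eq_add_neg, add_mul,
    add_comm]

omit [Fintype l] in
lemma isSymm_swap_permMatrix (i j : l) : ((Equiv.swap i j).permMatrix F).IsSymm := by
  simp [IsSymm, transpose_permMatrix]

lemma isSymm_swap_permMatrix_mul_transvection (i j : l) (c : F) :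
    ((Equiv.swap i j).permMatrix F * transvection i j c).IsSymm := by
  ext a b
  simp only [Equiv.Perm.permMatrix, transvection, Matrix.mul_add, mul_one, transpose_apply,
    Matrix.add_apply, PEquiv.toMatrix_apply, Equiv.toPEquiv_apply, Equiv.swap_apply_def,
    Option.mem_def, Option.some.injEq, Matrix.mul_apply, single_apply, ite_and, mul_ite, ite_mul,
    one_mul, zero_mul, mul_zero, Finset.sum_ite_eq, Finset.mem_univ, ↓reduceIte, Matrix.one_apply]
  split_ifs <;> grind

-- The column span of `[A; C]` is Lagrangian; for `n = 2` it is transversal to one of the four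
-- coordinate Lagrangians.
lemma exists_isUnit_det_one_sub_mul_add_mul {A B C D : Matrix (Fin 2) (Fin 2) F}
    (hg : fromBlocks A B C D ∈ symplecticGroup (Fin 2) F) :
    ∃ P : Matrix (Fin 2) (Fin 2) F, IsIdempotentElem P ∧ P.IsSymm ∧
      IsUnit ((1 - P) * A + P * C).det := by
  obtain ⟨hAC, -, hAD⟩ := fromBlocks_mem_iff.1 hg
  obtain ⟨p, q, r, s, rfl⟩ : ∃ p q r s, A = !![p, q; r, s] := ⟨_, _, _, _, eta_fin_two A⟩
  obtain ⟨u, v, w, z, rfl⟩ : ∃ u v w z, C = !![u, v; w, z] := ⟨_, _, _, _, eta_fin_two C⟩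
  obtain ⟨b₁, b₂, b₃, b₄, rfl⟩ : ∃ a b c d, B = !![a, b; c, d] := ⟨_, _, _, _, eta_fin_two B⟩
  obtain ⟨d₁, d₂, d₃, d₄, rfl⟩ : ∃ a b c d, D = !![a, b; c, d] := ⟨_, _, _, _, eta_fin_two D⟩
  by_contra! h
  have hminor (x y : F) (hx : x * x = x) (hy : y * y = y) :
      ((1 - x) * p + x * u) * ((1 - y) * s + y * z) -
        ((1 - x) * q + x * v) * ((1 - y) * r + y * w) = 0 := by
    simpa [isUnit_iff_ne_zero, det_fin_two, one_fin_two, diagonal_fin_two, Matrix.mul_apply]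
      using h (diagonal ![x, y]) (by simp [IsIdempotentElem, hx, hy]) (isSymm_diagonal _)
  have h00 : p * s - q * r = 0 := by simpa using hminor 0 0 (by simp) (by simp)
  have h10 : u * s - v * r = 0 := by simpa using hminor 1 0 (by simp) (by simp)
  have h01 : p * z - q * w = 0 := by simpa using hminor 0 1 (by simp) (by simp)
  have h11 : u * z - v * w = 0 := by simpa using hminor 1 1 (by simp) (by simp)
  have e : p * v + r * z = u * q + w * s := by
    simpa [Matrix.mul_apply] using congr_fun₂ hAC 0 1
  have e00 : p * d₁ + r * d₃ - (u * b₁ + w * b₃) = 1 := by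
    simpa [Matrix.mul_apply] using congr_fun₂ hAD 0 0
  have e01 : p * d₂ + r * d₄ - (u * b₂ + w * b₄) = 0 := by
    simpa [Matrix.mul_apply] using congr_fun₂ hAD 0 1
  have e11 : q * d₂ + s * d₄ - (v * b₂ + z * b₄) = 1 := by
    simpa [Matrix.mul_apply] using congr_fun₂ hAD 1 1
  -- Four of the six 2×2 minors of `[A; C]` vanish by `h00`, ..., `h11`; the Lagrangian relation `e`
  -- kills the other two, which contradicts `det (Aᵀ * D - Cᵀ * B) = 1` by Cauchy–Binet.
  have hd₁ : p * v - q * u = 0 := by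
    linear_combination (exp := 2)
      (p * v - q * u) * e + z * p * h10 - z * u * h00 - w * q * h10 + w * v * h00
  have hd₂ : r * z - s * w = 0 := by linear_combination e - hd₁
  refine one_ne_zero (α := F) ?_
  linear_combination -(q * d₂ + s * d₄ - (v * b₂ + z * b₄)) * e00 - e11
    + (q * d₁ + s * d₃ - (v * b₁ + z * b₃)) * e01 + (d₁ * d₄ - d₂ * d₃) * h00
    + (d₂ * b₁ - d₁ * b₂) * hd₁ + (d₂ * b₃ - d₁ * b₄) * h01 - (d₄ * b₁ - d₃ * b₂) * h10
    + (d₄ * b₃ - d₃ * b₄) * hd₂ + (b₁ * b₄ - b₂ * b₃) * h11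

variable (l F) in
/-- The commutator subgroup of `Sp`, as a submonoid of matrices, so that matrix identities can be
used without bundling them into the subtype `Sp`. -/
def commutatorImage : Submonoid (Matrix (l ⊕ l) (l ⊕ l) F) :=
  (commutator Sp).toSubmonoid.map (symplecticGroup l F).subtype

local notation "H" => commutatorImage l F

lemma mem_commutatorImage {A : Matrix (l ⊕ l) (l ⊕ l) F} :
    A ∈ H ↔ ∃ g ∈ commutator Sp, (g : Matrix (l ⊕ l) (l ⊕ l) F) = A :=
  Submonoid.mem_map

lemma mem_commutator_of_coe_mem {g : Sp} (hg : (g : Matrix (l ⊕ l) (l ⊕ l) F) ∈ H) :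
    g ∈ commutator Sp := by
  obtain ⟨h, hh, hhg⟩ := mem_commutatorImage.1 hg
  rwa [← Subtype.ext hhg]

lemma mem_of_mem_commutatorImage {A : Matrix (l ⊕ l) (l ⊕ l) F} (hA : A ∈ H) : A ∈ Sp := by
  obtain ⟨g, -, rfl⟩ := mem_commutatorImage.1 hA
  exact g.2

lemma inv_mem_commutatorImage {A : Matrix (l ⊕ l) (l ⊕ l) F} (hA : A ∈ H) : A⁻¹ ∈ H := by
  obtain ⟨a, ha, rfl⟩ := mem_commutatorImage.1 hA
  exact mem_commutatorImage.2 ⟨a⁻¹, inv_mem ha, coe_inv' a⟩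

open scoped commutatorElement in
lemma commutator_mem_commutatorImage {A B : Matrix (l ⊕ l) (l ⊕ l) F} (hA : A ∈ Sp)
    (hB : B ∈ Sp) : A * B * A⁻¹ * B⁻¹ ∈ H := by
  refine mem_commutatorImage.2 ⟨⁅(⟨A, hA⟩ : Sp), ⟨B, hB⟩⁆,
    Subgroup.commutator_mem_commutator (Subgroup.mem_top _) (Subgroup.mem_top _), ?_⟩
  simp [commutatorElement_def, coe_inv']

lemma conj_mem_commutatorImage {A B : Matrix (l ⊕ l) (l ⊕ l) F} (hA : A ∈ Sp)
    (hB : B ∈ H) : A * B * A⁻¹ ∈ H := by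
  obtain ⟨b, hb, rfl⟩ := mem_commutatorImage.1 hB
  set a : Sp := ⟨A, hA⟩
  have hN : (commutator Sp).Normal := by rw [commutator_def]; infer_instance
  refine mem_commutatorImage.2 ⟨a * b * a⁻¹, hN.conj_mem b hb a, ?_⟩
  rw [Submonoid.coe_mul, Submonoid.coe_mul, coe_inv']

section

variable {t : F} (ht : t ≠ 0) (ht' : t ^ 2 ≠ 1)
include ht ht'

lemma upperUnipotent_mem_commutatorImage {S : Matrix l l F} (hS : S.IsSymm) :
    upperUnipotent S ∈ H := by
  have hdet : IsUnit (t • (1 : Matrix l l F)).det := by simp [isUnit_iff_ne_zero, ht]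
  have h := commutator_mem_commutatorImage (levi_mem hdet)
    (upperUnipotent_mem (hS.smul (t ^ 2 - 1)⁻¹))
  rw [levi_mul_upperUnipotent_mul_inv hdet, upperUnipotent_inv,
    upperUnipotent_mul_upperUnipotent] at h
  convert h using 2
  have ht₁ : t ^ 2 - 1 ≠ 0 := sub_ne_zero.2 ht'
  simp only [transpose_smul, transpose_one, smul_mul_assoc, one_mul, mul_smul_comm, mul_one]
  match_scalars
  field_simp
  ring

lemma lowerUnipotent_mem_commutatorImage {S : Matrix l l F} (hS : S.IsSymm) :
    lowerUnipotent S ∈ H := by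
  rw [← J_mul_upperUnipotent_mul_inv]
  exact conj_mem_commutatorImage (J_mem l F) (upperUnipotent_mem_commutatorImage ht ht' hS.neg)

lemma J_mem_commutatorImage : J l F ∈ H := by
  rw [J_eq_upperUnipotent_mul_lowerUnipotent_mul_upperUnipotent]
  refine mul_mem (mul_mem ?_ ?_) ?_
  · exact upperUnipotent_mem_commutatorImage ht ht' isSymm_one.neg
  · exact lowerUnipotent_mem_commutatorImage ht ht' isSymm_one
  · exact upperUnipotent_mem_commutatorImage ht ht' isSymm_one.neg

lemma levi_mem_commutatorImage_of_isSymm {X : Matrix l l F} (hX : X.IsSymm)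
    (hdet : IsUnit X.det) : levi X ∈ H := by
  rw [levi_eq_of_isSymm hX hdet]
  refine mul_mem (mul_mem (mul_mem ?_ ?_) ?_) (J_mem_commutatorImage ht ht')
  · exact upperUnipotent_mem_commutatorImage ht ht' hX
  · exact lowerUnipotent_mem_commutatorImage ht ht' hX.inv.neg
  · exact upperUnipotent_mem_commutatorImage ht ht' hX

lemma levi_transvection_mem_commutatorImage {i j : l} (hij : i ≠ j) (c : F) :
    levi (transvection i j c) ∈ H := by
  set W := (Equiv.swap i j).permMatrix F
  have hWW : W * W = 1 := by simp [W, ← permMatrix_mul]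
  have hW : IsUnit W.det := IsUnit.of_mul_eq_one _ (by rw [← det_mul, hWW, det_one])
  rw [← one_mul (transvection i j c), ← hWW, mul_assoc, levi_mul]
  refine mul_mem (levi_mem_commutatorImage_of_isSymm ht ht' (isSymm_swap_permMatrix i j) hW)
    (levi_mem_commutatorImage_of_isSymm ht ht' (isSymm_swap_permMatrix_mul_transvection i j c) ?_)
  simpa [det_mul, det_transvection_of_ne _ _ hij] using hW

lemma levi_mem_commutatorImage {P : Matrix l l F} (hP : IsUnit P.det) : levi P ∈ H := by
  refine diagonal_transvection_induction_of_det_ne_zero (fun P => levi P ∈ H) P hP.ne_zero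
    (fun d hd => ?_) (fun T => ?_) (fun P Q _ _ hP hQ => ?_)
  · exact levi_mem_commutatorImage_of_isSymm ht ht' (isSymm_diagonal d) (isUnit_iff_ne_zero.2 hd)
  · exact levi_transvection_mem_commutatorImage ht ht' T.hij T.c
  · rw [levi_mul]
    exact mul_mem hP hQ

lemma mem_commutatorImage_of_isUnit_det {A B C D : Matrix l l F}
    (hg : fromBlocks A B C D ∈ Sp) (hA : IsUnit A.det) : fromBlocks A B C D ∈ H := by
  obtain ⟨hAC, -, hAD⟩ := fromBlocks_mem_iff.1 hg
  obtain ⟨hAB, -, -⟩ := fromBlocks_mem_iff.1 (fromBlocks_transpose A B C D ▸ transpose_mem hg)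
  have hAT : IsUnit Aᵀ.det := isUnit_det_transpose A hA
  have hX : (C * A⁻¹).IsSymm := by
    rw [IsSymm, transpose_mul, transpose_nonsing_inv]
    calc Aᵀ⁻¹ * Cᵀ = Aᵀ⁻¹ * (Cᵀ * A) * A⁻¹ := by
          rw [Matrix.mul_assoc, Matrix.mul_assoc, mul_nonsing_inv A hA, Matrix.mul_one]
      _ = C * A⁻¹ := by rw [← hAC, nonsing_inv_mul_cancel_left _ _ hAT]
  have hS : (B * Aᵀ).IsSymm := by
    rw [IsSymm, transpose_mul, transpose_transpose]
    simpa using hAB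
  have hD : D = C * A⁻¹ * B + A⁻¹ᵀ := by
    calc D = Aᵀ⁻¹ * (Aᵀ * D) := (nonsing_inv_mul_cancel_left _ _ hAT).symm
      _ = Aᵀ⁻¹ * (Cᵀ * B + 1) := by rw [← hAD, add_sub_cancel]
      _ = C * A⁻¹ * B + A⁻¹ᵀ := by
          rw [Matrix.mul_add, ← Matrix.mul_assoc, ← transpose_nonsing_inv, ← transpose_mul, hX.eq,
            Matrix.mul_one]
  have hfac : fromBlocks A B C D =
      lowerUnipotent (C * A⁻¹) * upperUnipotent (B * Aᵀ) * levi A := by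
    have hAA : Aᵀ * A⁻¹ᵀ = 1 := by rw [← transpose_mul, nonsing_inv_mul _ hA, transpose_one]
    simp [lowerUnipotent, upperUnipotent, levi, fromBlocks_multiply, Matrix.mul_assoc, hAA,
      nonsing_inv_mul _ hA, hD, Matrix.add_mul]
  rw [hfac]
  exact mul_mem (mul_mem (lowerUnipotent_mem_commutatorImage ht ht' hX)
    (upperUnipotent_mem_commutatorImage ht ht' hS)) (levi_mem_commutatorImage ht ht' hA)

lemma mem_commutatorImage_of_isUnit_det_one_sub_mul_add_mul {A B C D P : Matrix l l F}
    (hg : fromBlocks A B C D ∈ Sp) (hP : IsIdempotentElem P) (hPs : P.IsSymm)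
    (hdet : IsUnit ((1 - P) * A + P * C).det) : fromBlocks A B C D ∈ H := by
  set w := upperUnipotent P * lowerUnipotent (-P) * upperUnipotent P with hw_def
  have hw : w ∈ H :=
    mul_mem (mul_mem (upperUnipotent_mem_commutatorImage ht ht' hPs)
      (lowerUnipotent_mem_commutatorImage ht ht' hPs.neg))
      (upperUnipotent_mem_commutatorImage ht ht' hPs)
  have hwSp := mem_of_mem_commutatorImage hw
  rw [← nonsing_inv_mul_cancel_left w (fromBlocks A B C D) (symplectic_det hwSp)]
  refine mul_mem (inv_mem_commutatorImage hw) ?_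
  have hwg := mul_mem hwSp hg
  rw [hw_def, upperUnipotent_mul_lowerUnipotent_mul_upperUnipotent hP, fromBlocks_multiply]
    at hwg ⊢
  exact mem_commutatorImage_of_isUnit_det ht ht' hwg hdet

theorem commutator_symplecticGroup_fin_two_eq_top :
    commutator (symplecticGroup (Fin 2) F) = ⊤ := by
  refine eq_top_iff.2 fun g _ => mem_commutator_of_coe_mem ?_
  obtain ⟨A, B, C, D, hg⟩ : ∃ A B C D, (g : Matrix (Fin 2 ⊕ Fin 2) (Fin 2 ⊕ Fin 2) F) =
      fromBlocks A B C D := ⟨_, _, _, _, (fromBlocks_toBlocks _).symm⟩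
  have hmem := g.2
  rw [hg] at hmem ⊢
  obtain ⟨P, hP, hPs, hdet⟩ := exists_isUnit_det_one_sub_mul_add_mul hmem
  exact mem_commutatorImage_of_isUnit_det_one_sub_mul_add_mul ht ht' hmem hP hPs hdet

end

end SymplecticGroup

lemma exists_ne_zero_sq_ne_one {F : Type*} [Field F] [Fintype F] (hF : 4 ≤ Fintype.card F) :
    ∃ t : F, t ≠ 0 ∧ t ^ 2 ≠ 1 := by
  classical
  by_contra! h
  have hsub : (Finset.univ : Finset F) ⊆ {0, 1, -1} := by
    intro t _
    by_cases ht : t = 0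
    · simp [ht]
    rcases mul_self_eq_one_iff.1 ((sq t).symm.trans (h t ht)) with h1 | h1 <;> simp [h1]
  have := (Finset.card_le_card hsub).trans Finset.card_le_three
  rw [Finset.card_univ] at this
  omega

/-- If `F` is a finite field with `|F| ≥ 5`, then `Sp₄(F)` is perfect. -/
theorem stmt_6 (F : Type*) [Field F] [Fintype F] (h5 : 5 ≤ Fintype.card F) :
    commutator (Matrix.symplecticGroup (Fin 2) F) = ⊤ := by
  obtain ⟨t, ht, ht'⟩ := exists_ne_zero_sq_ne_one (F := F) (by omega)
  exact SymplecticGroup.commutator_symplecticGroup_fin_two_eq_top ht ht'
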